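/- Let (p_t) be a continuous-path [0,1]-valued martingale with p_0 ∈ [1/2,1), p_1 = Y ∈ {0,1} a.s., q_t = 1−p_t, and M_λ the eventual loser's running maximum (M_λ = sup_t p_t on {Y=0}, sup_t q_t on {Y=1}). Then E-type tail identity: for all x ∈ [p_0, 1), P(M_λ ≥ x) = (1/x) − 1; and for x ∈ [1−p_0, p_0), P(M_λ ≥ x) = (1−p_0)/x. -/

import Mathlib

open MeasureTheory Filter Set unitInterval Topology

namespace Stmt18Aux

variable {Ω : Type*} {m0 : MeasurableSpace Ω}

noncomputable def Ff (f : unitInterval → Ω → ℝ) (t : ℝ) (ω : Ω) : ℝ :=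
  f (Set.projIcc 0 1 zero_le_one t) ω

def hitSet (f : unitInterval → Ω → ℝ) (x : ℝ) (ω : Ω) : Set ℝ :=
  {t | t ∈ Icc (0:ℝ) 1 ∧ x ≤ Ff f t ω}

open Classical in
noncomputable def nu (f : unitInterval → Ω → ℝ) (x : ℝ) (n : ℕ) (ω : Ω) : ℕ :=
  if (hitSet f x ω).Nonempty then ⌈(2^n : ℝ) * sInf (hitSet f x ω)⌉₊ else 2^n

noncomputable def sig (n k : ℕ) : unitInterval := Set.projIcc 0 1 zero_le_one ((k:ℝ)/2^n)

lemma sig_mono (n : ℕ) : Monotone (sig n) := fun i j hij =>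
  monotone_projIcc zero_le_one
    (div_le_div_of_nonneg_right (by exact_mod_cast hij) (by positivity))

noncomputable def gfilt (ℱ : Filtration unitInterval m0) (n : ℕ) : Filtration ℕ m0 :=
  ⟨fun k => ℱ (sig n k), fun i j hij => ℱ.mono (sig_mono n hij), fun k => ℱ.le _⟩

lemma Ff_continuous {f : unitInterval → Ω → ℝ} (hcont : ∀ ω, Continuous fun t => f t ω) (ω : Ω) :
    Continuous fun t => Ff f t ω := (hcont ω).comp continuous_projIcc

lemma hitSet_closed {f : unitInterval → Ω → ℝ} (hcont : ∀ ω, Continuous fun t => f t ω)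
    (x : ℝ) (ω : Ω) : IsClosed (hitSet f x ω) := by
  have : hitSet f x ω = Icc 0 1 ∩ (fun t => Ff f t ω) ⁻¹' Ici x := by
    ext t; simp [hitSet, Set.mem_setOf_eq, and_comm]
  rw [this]
  exact isClosed_Icc.inter (isClosed_Ici.preimage (Ff_continuous hcont ω))

lemma hitSet_bddBelow (f : unitInterval → Ω → ℝ) (x : ℝ) (ω : Ω) :
    BddBelow (hitSet f x ω) := ⟨0, fun t ht => ht.1.1⟩

lemma sInf_mem_hitSet {f : unitInterval → Ω → ℝ} (hcont : ∀ ω, Continuous fun t => f t ω)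
    {x : ℝ} {ω : Ω} (h : (hitSet f x ω).Nonempty) :
    sInf (hitSet f x ω) ∈ hitSet f x ω :=
  (hitSet_closed hcont x ω).csInf_mem h (hitSet_bddBelow f x ω)

lemma Ff_sInf_eq {f : unitInterval → Ω → ℝ} (hcont : ∀ ω, Continuous fun t => f t ω)
    {x : ℝ} {ω : Ω} (hg0 : Ff f 0 ω ≤ x) (h : (hitSet f x ω).Nonempty) :
    Ff f (sInf (hitSet f x ω)) ω = x := by
  have hmem := sInf_mem_hitSet hcont h
  set τ := sInf (hitSet f x ω) with hτdef
  refine le_antisymm ?_ hmem.2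
  rcases eq_or_lt_of_le hmem.1.1 with h0 | hpos
  · rw [show τ = 0 from h0.symm]; exact hg0
  · by_contra hlt
    push_neg at hlt
    have hopen : IsOpen {s : ℝ | x < Ff f s ω} := isOpen_lt continuous_const (Ff_continuous hcont ω)
    obtain ⟨δ, hδ, hball⟩ := Metric.isOpen_iff.1 hopen τ hlt
    set s := max (τ/2) (τ - δ/2) with hs
    have hsτ : s < τ := max_lt (by linarith) (by linarith)
    have hs0 : 0 ≤ s := le_trans (by linarith) (le_max_left _ _)
    have hsmem : s ∈ Metric.ball τ δ := by
      rw [Metric.mem_ball, Real.dist_eq, abs_of_nonpos (by linarith)]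
      have : τ - δ/2 ≤ s := le_max_right _ _
      linarith
    have hsS : s ∈ hitSet f x ω :=
      ⟨⟨hs0, le_trans hsτ.le hmem.1.2⟩, (hball hsmem).le⟩
    exact absurd (csInf_le (hitSet_bddBelow f x ω) hsS) (not_le.2 hsτ)


lemma clamp_max {g : ℝ → ℝ} (hg : Continuous g) {u : ℝ} (hu : 0 ≤ u) :
    ∃ a ∈ Icc (0:ℝ) u, (∀ s ∈ Icc (0:ℝ) u, g s ≤ g a) ∧
      (⨆ q : ℚ, g (min (max 0 (q:ℝ)) u)) = g a := by
  obtain ⟨a, ha, hmax⟩ := isCompact_Icc.exists_isMaxOn (nonempty_Icc.2 hu) hg.continuousOn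
  have hclamp : ∀ q : ℚ, min (max 0 (q:ℝ)) u ∈ Icc (0:ℝ) u :=
    fun q => ⟨le_min (le_max_left _ _) hu, min_le_right _ _⟩
  refine ⟨a, ha, hmax, le_antisymm (ciSup_le fun q => hmax (hclamp q)) ?_⟩
  obtain ⟨s, hs⟩ : ∃ s : ℕ → ℚ, Tendsto (fun n => (s n : ℝ)) atTop (nhds a) := by
    obtain ⟨v, hv1, hv2⟩ := mem_closure_iff_seq_limit.1
      (by rw [Rat.denseRange_cast.closure_eq]; trivial : a ∈ closure (Set.range ((↑) : ℚ → ℝ)))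
    choose s hs using hv1
    exact ⟨s, by simpa [hs] using hv2⟩
  have hcl : Continuous (fun t : ℝ => g (min (max 0 t) u)) :=
    hg.comp (((continuous_const.max continuous_id)).min continuous_const)
  have hlim : Tendsto (fun n => g (min (max 0 (s n : ℝ)) u)) atTop (nhds (g a)) := by
    have := (hcl.continuousAt (x := a)).tendsto.comp hs
    simpa [Function.comp_def, max_eq_right ha.1, min_eq_left ha.2] using this
  refine le_of_tendsto hlim (Eventually.of_forall fun n => ?_)
  exact le_ciSup ⟨g a, fun y ⟨q, hq⟩ => hq ▸ hmax (hclamp q)⟩ (s n)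


lemma exists_iff_qsup {g : ℝ → ℝ} (hg : Continuous g) {u x : ℝ} (hu : 0 ≤ u) :
    (∃ t, t ∈ Icc (0:ℝ) u ∧ x ≤ g t) ↔ x ≤ ⨆ q : ℚ, g (min (max 0 (q:ℝ)) u) := by
  obtain ⟨a, ha, hmax, hsup⟩ := clamp_max hg hu
  rw [hsup]
  exact ⟨fun ⟨t, ht, hxt⟩ => le_trans hxt (hmax t ht), fun h => ⟨a, ha, h⟩⟩

/-- characterization of `{ν ≤ k}` as a hit-by-time-u event -/
lemma hit_by_iff {f : unitInterval → Ω → ℝ} (hcont : ∀ ω, Continuous fun t => f t ω)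
    {x u : ℝ} (hu0 : 0 ≤ u) (hu1 : u ≤ 1) (ω : Ω) :
    ((hitSet f x ω).Nonempty ∧ sInf (hitSet f x ω) ≤ u) ↔
      (∃ t, t ∈ Icc (0:ℝ) u ∧ x ≤ Ff f t ω) := by
  constructor
  · rintro ⟨h, hle⟩
    have hmem := sInf_mem_hitSet hcont h
    exact ⟨sInf (hitSet f x ω), ⟨hmem.1.1, hle⟩, hmem.2⟩
  · rintro ⟨t, ht, hxt⟩
    have htS : t ∈ hitSet f x ω := ⟨⟨ht.1, ht.2.trans hu1⟩, hxt⟩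
    exact ⟨⟨t, htS⟩, (csInf_le (hitSet_bddBelow f x ω) htS).trans ht.2⟩

lemma nu_le {f : unitInterval → Ω → ℝ} (hcont : ∀ ω, Continuous fun t => f t ω)
    (x : ℝ) (n : ℕ) (ω : Ω) : nu f x n ω ≤ 2^n := by
  rw [nu]
  split_ifs with h
  · refine Nat.ceil_le.2 ?_
    have h1 : sInf (hitSet f x ω) ≤ 1 := (sInf_mem_hitSet hcont h).1.2
    have h0 : (0:ℝ) ≤ sInf (hitSet f x ω) := (sInf_mem_hitSet hcont h).1.1
    push_cast
    nlinarith [pow_pos (by norm_num : (0:ℝ) < 2) n]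
  · exact le_rfl


lemma qsup_measurable {ℱ : Filtration unitInterval m0} {f : unitInterval → Ω → ℝ}
    (hadp : Adapted ℱ f) {u : ℝ} {v : unitInterval} (huv : u ≤ (v:ℝ)) (x : ℝ) :
    MeasurableSet[ℱ v] {ω | x ≤ ⨆ q : ℚ, Ff f (min (max 0 (q:ℝ)) u) ω} := by
  refine measurableSet_le measurable_const (Measurable.iSup fun q => ?_)
  have hle : Set.projIcc 0 1 zero_le_one (min (max 0 (q:ℝ)) u) ≤ v := by
    have h1 : min (max 0 (q:ℝ)) u ≤ (v:ℝ) := (min_le_right _ _).trans huv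
    have := monotone_projIcc zero_le_one h1
    rwa [Set.projIcc_val zero_le_one v] at this
  exact (hadp _).mono (ℱ.mono hle) le_rfl

lemma nu_isStoppingTime {ℱ : Filtration unitInterval m0} {f : unitInterval → Ω → ℝ}
    (hadp : Adapted ℱ f) (hcont : ∀ ω, Continuous fun t => f t ω) (x : ℝ) (n : ℕ) :
    IsStoppingTime (gfilt ℱ n) (fun ω => WithTop.some (nu f x n ω)) := by
  intro k
  simp only [WithTop.coe_le_coe]
  by_cases hk : 2^n ≤ k
  · have : {ω | nu f x n ω ≤ k} = univ :=
      eq_univ_of_forall fun ω => (nu_le hcont x n ω).trans hk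
    rw [this]; exact MeasurableSet.univ
  · push_neg at hk
    have h2 : (0:ℝ) < 2^n := by positivity
    set u := (k:ℝ)/2^n with hudef
    have hu0 : 0 ≤ u := by positivity
    have hu1 : u ≤ 1 := by
      rw [hudef, div_le_one h2]; exact_mod_cast hk.le
    have hset : {ω | nu f x n ω ≤ k} = {ω | x ≤ ⨆ q : ℚ, Ff f (min (max 0 (q:ℝ)) u) ω} := by
      ext ω
      have h1 : nu f x n ω ≤ k ↔ ((hitSet f x ω).Nonempty ∧ sInf (hitSet f x ω) ≤ u) := by
        rw [nu]; split_ifs with h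
        · rw [Nat.ceil_le, mul_comm, ← le_div_iff₀ h2]
          exact ⟨fun hh => ⟨h, hh⟩, fun hh => hh.2⟩
        · exact iff_of_false (by omega) (fun hh => h hh.1)
      rw [Set.mem_setOf_eq, h1, hit_by_iff hcont hu0 hu1 ω,
        exists_iff_qsup (Ff_continuous hcont ω) hu0]
      rfl
    rw [hset]
    have huv : u ≤ ((sig n k : unitInterval) : ℝ) := by
      rw [sig, Set.coe_projIcc]
      simp [hu0, hu1]
      exact Or.inr le_rfl
    exact qsup_measurable hadp huv x

lemma iSup_eq_max {f : unitInterval → Ω → ℝ} (hcont : ∀ ω, Continuous fun t => f t ω)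
    (hbdd : ∀ t ω, f t ω ∈ Icc (0:ℝ) 1) (ω : Ω) :
    ∃ a, a ∈ Icc (0:ℝ) 1 ∧ (∀ s ∈ Icc (0:ℝ) 1, Ff f s ω ≤ Ff f a ω) ∧
      (⨆ t, f t ω) = Ff f a ω ∧
      (⨆ q : ℚ, Ff f (min (max 0 (q:ℝ)) 1) ω) = Ff f a ω := by
  obtain ⟨a, ha, hmax, hsup⟩ := clamp_max (Ff_continuous hcont ω) zero_le_one
  refine ⟨a, ha, hmax, ?_, hsup⟩
  refine le_antisymm (ciSup_le fun t => ?_) ?_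
  · have := hmax (t:ℝ) ⟨t.2.1, t.2.2⟩
    simpa [Ff, Set.projIcc_val] using this
  · have h1 : Ff f a ω = f ⟨a, ha⟩ ω := by rw [Ff, Set.projIcc_of_mem zero_le_one ha]
    rw [h1]
    have hbb : BddAbove (Set.range fun t : unitInterval => f t ω) := by
      refine ⟨1, ?_⟩
      rintro y ⟨t, rfl⟩
      exact (hbdd t ω).2
    exact le_ciSup hbb (⟨a, ha⟩ : unitInterval)

lemma mem_A_iff {f : unitInterval → Ω → ℝ} (hcont : ∀ ω, Continuous fun t => f t ω)
    (hbdd : ∀ t ω, f t ω ∈ Icc (0:ℝ) 1) (x : ℝ) (ω : Ω) :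
    (x ≤ ⨆ t, f t ω) ↔ (hitSet f x ω).Nonempty := by
  obtain ⟨a, ha, hmax, hsupI, _⟩ := iSup_eq_max hcont hbdd ω
  rw [hsupI]
  exact ⟨fun h => ⟨a, ha, h⟩, fun ⟨t, ht, hxt⟩ => hxt.trans (hmax t ht)⟩

lemma A_measurable {ℱ : Filtration unitInterval m0} {f : unitInterval → Ω → ℝ}
    (hadp : Adapted ℱ f) (hcont : ∀ ω, Continuous fun t => f t ω)
    (hbdd : ∀ t ω, f t ω ∈ Icc (0:ℝ) 1) (x : ℝ) :
    MeasurableSet {ω | x ≤ ⨆ t, f t ω} := by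
  have hset : {ω | x ≤ ⨆ t, f t ω} = {ω | x ≤ ⨆ q : ℚ, Ff f (min (max 0 (q:ℝ)) 1) ω} := by
    ext ω
    obtain ⟨a, ha, hmax, hsupI, hsupQ⟩ := iSup_eq_max hcont hbdd ω
    rw [Set.mem_setOf_eq, Set.mem_setOf_eq, hsupI, hsupQ]
  rw [hset]
  exact (ℱ.le 1) _ (qsup_measurable hadp (by norm_num [unitInterval]) x)


open Classical in
lemma maximal_tail {μ : Measure Ω} [IsProbabilityMeasure μ]
    {ℱ : Filtration unitInterval m0} {f : unitInterval → Ω → ℝ} {c : ℝ}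
    (hmart : Martingale f ℱ μ) (hcont : ∀ ω, Continuous fun t => f t ω)
    (hbdd : ∀ t ω, f t ω ∈ Icc (0:ℝ) 1) (h0 : ∀ ω, f 0 ω = c)
    (h1 : ∀ᵐ ω ∂μ, f 1 ω = 0 ∨ f 1 ω = 1)
    {x : ℝ} (hx0 : 0 < x) (hcx : c ≤ x) (hx1 : x < 1) :
    (μ {ω | x ≤ ⨆ t, f t ω}).toReal = c / x := by
  have hproj0 : Set.projIcc (0:ℝ) 1 zero_le_one (0:ℝ) = (0 : unitInterval) :=
    Subtype.ext (by simp [Set.coe_projIcc])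
  have hproj1 : Set.projIcc (0:ℝ) 1 zero_le_one (1:ℝ) = (1 : unitInterval) :=
    Subtype.ext (by simp [Set.coe_projIcc])
  have hg0 : ∀ ω, Ff f 0 ω ≤ x := fun ω => by rw [Ff, hproj0, h0]; exact hcx
  set A := {ω | x ≤ ⨆ t, f t ω} with hAdef
  have hAmeas : MeasurableSet A := A_measurable hmart.stronglyAdapted.adapted hcont hbdd x
  -- discrete martingales and optional stopping
  have gmart : ∀ n, Martingale (fun k => f (sig n k)) (gfilt ℱ n) μ :=
    fun n => ⟨fun k => hmart.stronglyAdapted _, fun i j hij => hmart.2 _ _ (sig_mono n hij)⟩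
  have hν : ∀ n, IsStoppingTime (gfilt ℱ n) (fun ω => WithTop.some (nu f x n ω)) :=
    fun n => nu_isStoppingTime hmart.stronglyAdapted.adapted hcont x n
  have hνbd : ∀ n ω, nu f x n ω ≤ 2^n := fun n ω => nu_le hcont x n ω
  have hsig0 : ∀ n, sig n 0 = 0 := fun n =>
    Subtype.ext (by simp [sig, Set.coe_projIcc])
  have hint : ∀ n, (∫ ω, stoppedValue (fun k => f (sig n k)) (fun ω => WithTop.some (nu f x n ω)) ω ∂μ) = c := by
    intro n
    have hsv0 : stoppedValue (fun k => f (sig n k)) (fun _ => WithTop.some 0) = fun ω => c := by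
      funext ω
      rw [stoppedValue]
      change f (sig n 0) ω = c
      simp only [hsig0 n, h0]
    have key1 := (gmart n).submartingale.expected_stoppedValue_mono
      (isStoppingTime_const (gfilt ℱ n) 0) (hν n) (fun ω => WithTop.coe_le_coe.2 (Nat.zero_le _)) (fun ω => WithTop.coe_le_coe.2 (hνbd n ω))
    have key2 := (gmart n).neg.submartingale.expected_stoppedValue_mono
      (isStoppingTime_const (gfilt ℱ n) 0) (hν n) (fun ω => WithTop.coe_le_coe.2 (Nat.zero_le _)) (fun ω => WithTop.coe_le_coe.2 (hνbd n ω))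
    have hneg1 : stoppedValue (-fun k => f (sig n k)) (fun _ => WithTop.some 0)
        = -stoppedValue (fun k => f (sig n k)) (fun _ => WithTop.some 0) := rfl
    have hneg2 : stoppedValue (-fun k => f (sig n k)) (fun ω => WithTop.some (nu f x n ω))
        = -stoppedValue (fun k => f (sig n k)) (fun ω => WithTop.some (nu f x n ω)) := rfl
    rw [hsv0] at key1
    rw [hneg1, hneg2, hsv0] at key2
    simp only [Pi.neg_apply] at key2
    rw [integral_neg, integral_neg, neg_le_neg_iff] at key2
    have hc : (∫ (_ : Ω), c ∂μ) = c := by simp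
    rw [hc] at key1 key2
    exact le_antisymm key2 key1
  have hVmeas : ∀ n, AEStronglyMeasurable (stoppedValue (fun k => f (sig n k)) (fun ω => WithTop.some (nu f x n ω))) μ :=
    fun n => ((stronglyMeasurable_stoppedValue_of_le
      (gmart n).stronglyAdapted.progMeasurable_of_discrete (hν n) (fun ω => WithTop.coe_le_coe.2 (hνbd n ω))).mono
      ((gfilt ℱ n).le _)).aestronglyMeasurable
  set L : Ω → ℝ := fun ω => if (hitSet f x ω).Nonempty then x else f 1 ω with hLdef
  have hlim : ∀ ω, Tendsto (fun n => stoppedValue (fun k => f (sig n k)) (fun ω => WithTop.some (nu f x n ω)) ω)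
      atTop (𝓝 (L ω)) := by
    intro ω
    by_cases h : (hitSet f x ω).Nonempty
    · have hτmem := sInf_mem_hitSet hcont h
      have hτx : Ff f (sInf (hitSet f x ω)) ω = x := Ff_sInf_eq hcont (hg0 ω) h
      set τ := sInf (hitSet f x ω) with hτdef
      have heq : ∀ n, stoppedValue (fun k => f (sig n k)) (fun ω => WithTop.some (nu f x n ω)) ω
          = Ff f ((⌈(2^n : ℝ) * τ⌉₊ : ℝ)/2^n) ω := by
        intro n
        rw [stoppedValue, nu, if_pos h]
        rfl
      have hu : Tendsto (fun n => (⌈(2^n : ℝ) * τ⌉₊ : ℝ)/2^n) atTop (𝓝 τ) := by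
        have h2 : ∀ n : ℕ, (0:ℝ) < 2^n := fun n => by positivity
        have hlo : ∀ n : ℕ, τ ≤ (⌈(2^n : ℝ) * τ⌉₊ : ℝ)/2^n := fun n => by
          rw [le_div_iff₀ (h2 n), mul_comm]
          exact Nat.le_ceil _
        have hhi : ∀ n : ℕ, (⌈(2^n : ℝ) * τ⌉₊ : ℝ)/2^n ≤ τ + (1/2)^n := fun n => by
          rw [div_le_iff₀ (h2 n)]
          have := (Nat.ceil_lt_add_one (mul_nonneg (le_of_lt (by positivity : (0:ℝ) < 2^n)) hτmem.1.1)).le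
          calc (⌈(2^n : ℝ) * τ⌉₊ : ℝ) ≤ 2^n * τ + 1 := this
          _ = (τ + (1/2)^n) * 2^n := by
              field_simp
              rw [mul_add, ← mul_pow, mul_one_div_cancel two_ne_zero, one_pow]
        have hpow : Tendsto (fun n : ℕ => τ + ((1:ℝ)/2)^n) atTop (𝓝 (τ + 0)) :=
          tendsto_const_nhds.add (tendsto_pow_atTop_nhds_zero_of_lt_one (by norm_num) (by norm_num))
        rw [add_zero] at hpow
        exact tendsto_of_tendsto_of_tendsto_of_le_of_le tendsto_const_nhds hpow hlo hhi
      have := ((Ff_continuous hcont ω).continuousAt (x := τ)).tendsto.comp hu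
      rw [hτx] at this
      have hL : L ω = x := by rw [hLdef]; exact if_pos h
      rw [hL]
      exact Tendsto.congr (fun n => (heq n).symm) this
    · have heq : ∀ n, stoppedValue (fun k => f (sig n k)) (fun ω => WithTop.some (nu f x n ω)) ω = f 1 ω := by
        intro n
        have harg : (((2:ℕ)^n : ℕ) : ℝ)/(2:ℝ)^n = 1 := by
          rw [Nat.cast_pow, Nat.cast_ofNat, div_self (by positivity : ((2:ℝ)^n) ≠ 0)]
        have hsig2 : sig n (2^n) = 1 := by rw [sig, harg]; exact hproj1
        rw [stoppedValue, nu, if_neg h]; change f (sig n (2^n)) ω = f 1 ω; rw [hsig2]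
      have hL : L ω = f 1 ω := by rw [hLdef]; exact if_neg h
      rw [hL]
      simp only [heq]
      exact tendsto_const_nhds
  have hdct := tendsto_integral_of_dominated_convergence (μ := μ)
      (F := fun n => stoppedValue (fun k => f (sig n k)) (fun ω => WithTop.some (nu f x n ω))) (f := L)
      (fun _ => (1:ℝ)) hVmeas (integrable_const 1)
      (fun n => Eventually.of_forall fun ω => by
        show |f (sig n (nu f x n ω)) ω| ≤ 1
        rw [abs_le]
        exact ⟨by linarith [(hbdd (sig n (nu f x n ω)) ω).1], (hbdd (sig n (nu f x n ω)) ω).2⟩)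
      (Eventually.of_forall hlim)
  simp only [hint] at hdct
  have hIL : (∫ ω, L ω ∂μ) = c := tendsto_nhds_unique hdct tendsto_const_nhds
  have hLae : L =ᵐ[μ] A.indicator (fun _ => x) := by
    filter_upwards [h1] with ω hω
    by_cases h : (hitSet f x ω).Nonempty
    · have hA : ω ∈ A := (mem_A_iff hcont hbdd x ω).2 h
      simp [hLdef, if_pos h, Set.indicator_of_mem hA]
    · have hA : ω ∉ A := fun hA => h ((mem_A_iff hcont hbdd x ω).1 hA)
      have hf1 : f 1 ω < x := by
        by_contra hle
        push_neg at hle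
        exact h ⟨1, ⟨⟨zero_le_one, le_rfl⟩, by rwa [Ff, hproj1]⟩⟩
      have hf0 : f 1 ω = 0 := by
        rcases hω with h0' | h1'
        · exact h0'
        · linarith
      simp [hLdef, if_neg h, Set.indicator_of_notMem hA, hf0]
  rw [integral_congr_ae hLae, integral_indicator_const _ hAmeas, smul_eq_mul] at hIL
  rw [eq_div_iff (ne_of_gt hx0)]
  change (μ A).toReal * x = c at hIL
  linarith

end Stmt18Aux


open MeasureTheory ProbabilityTheory unitInterval


open MeasureTheory ProbabilityTheory unitInterval

theorem stmt_18 {Ω : Type*} {m0 : MeasurableSpace Ω} {μ : Measure Ω}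
    [IsProbabilityMeasure μ]
    {ℱ : Filtration unitInterval m0} {p : unitInterval → Ω → ℝ} {Y : Ω → ℝ} {p₀ : ℝ}
    (hmart : Martingale p ℱ μ)
    (hcont : ∀ ω, Continuous fun t => p t ω)
    (hbdd : ∀ t ω, p t ω ∈ Set.Icc (0:ℝ) 1)
    (hp0 : ∀ ω, p 0 ω = p₀)
    (hY : ∀ᵐ ω ∂μ, Y ω = 0 ∨ Y ω = 1)
    (hterm : ∀ᵐ ω ∂μ, p 1 ω = Y ω)
    (hprior : (μ {ω | Y ω = 1}).toReal = p₀)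
    (hhalf : 1/2 ≤ p₀) (hlt : p₀ < 1) :
    (∀ x : ℝ, p₀ ≤ x → x < 1 →
      (μ {ω | x ≤ (fun ω => if Y ω = 0 then ⨆ t, p t ω else ⨆ t, (1 - p t ω)) ω}).toReal = 1 / x - 1) ∧
    (∀ x : ℝ, 1 - p₀ ≤ x → x < p₀ →
      (μ {ω | x ≤ (fun ω => if Y ω = 0 then ⨆ t, p t ω else ⨆ t, (1 - p t ω)) ω}).toReal = (1 - p₀) / x) := by
  classical
  have hqmart : Martingale (fun t ω => 1 - p t ω) ℱ μ := by
    have h := (martingale_const ℱ μ (1:ℝ)).sub hmart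
    exact h
  have hqcont : ∀ ω, Continuous fun t => 1 - p t ω :=
    fun ω => continuous_const.sub (hcont ω)
  have hqbdd : ∀ (t : unitInterval) ω, (1 - p t ω) ∈ Set.Icc (0:ℝ) 1 := fun t ω =>
    ⟨by linarith [(hbdd t ω).2], by linarith [(hbdd t ω).1]⟩
  have hq0 : ∀ ω, 1 - p 0 ω = 1 - p₀ := fun ω => by rw [hp0]
  have hp1 : ∀ᵐ ω ∂μ, p 1 ω = 0 ∨ p 1 ω = 1 := by
    filter_upwards [hY, hterm] with ω h1 h2
    rw [h2]; exact h1
  have hq1 : ∀ᵐ ω ∂μ, (1 - p 1 ω) = 0 ∨ (1 - p 1 ω) = 1 := by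
    filter_upwards [hp1] with ω h1
    rcases h1 with h | h <;> simp [h]
  have hp₀pos : (0:ℝ) < p₀ := by linarith
  have h1p₀pos : (0:ℝ) < 1 - p₀ := by linarith
  have hp_tail : ∀ x : ℝ, p₀ ≤ x → x < 1 → (μ {ω | x ≤ ⨆ t, p t ω}).toReal = p₀ / x :=
    fun x h1x h2x => Stmt18Aux.maximal_tail hmart hcont hbdd hp0 hp1
      (lt_of_lt_of_le hp₀pos h1x) h1x h2x
  have hq_tail : ∀ x : ℝ, 1 - p₀ ≤ x → x < 1 →
      (μ {ω | x ≤ ⨆ t, (1 - p t ω)}).toReal = (1 - p₀) / x :=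
    fun x h1x h2x => Stmt18Aux.maximal_tail hqmart hqcont hqbdd hq0 hq1
      (lt_of_lt_of_le h1p₀pos h1x) h1x h2x
  have hp1meas : Measurable (p 1) := ((hmart.stronglyAdapted 1).mono (ℱ.le 1)).measurable
  have hBmeas : MeasurableSet {ω | p 1 ω = 1} := hp1meas (measurableSet_singleton 1)
  have hBae : {ω | Y ω = 1} =ᵐ[μ] {ω | p 1 ω = 1} := by
    rw [Filter.eventuallyEq_set]
    filter_upwards [hterm] with ω h
    simp only [Set.mem_setOf_eq, h]
  have hμB : (μ {ω | p 1 ω = 1}).toReal = p₀ := by rw [← measure_congr hBae]; exact hprior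
  have hμBc : (μ {ω | p 1 ω = 1}ᶜ).toReal = 1 - p₀ := by
    have hadd : μ {ω | p 1 ω = 1} + μ {ω | p 1 ω = 1}ᶜ = 1 := by
      rw [measure_add_measure_compl hBmeas, measure_univ]
    have h2 := congrArg ENNReal.toReal hadd
    rw [ENNReal.toReal_add (measure_ne_top μ _) (measure_ne_top μ _)] at h2
    simp only [ENNReal.toReal_one] at h2
    linarith [hμB]
  have hApm : ∀ x : ℝ, MeasurableSet {ω | x ≤ ⨆ t, p t ω} :=
    fun x => Stmt18Aux.A_measurable hmart.stronglyAdapted.adapted hcont hbdd x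
  have hAqm : ∀ x : ℝ, MeasurableSet {ω | x ≤ ⨆ t, (1 - p t ω)} :=
    fun x => Stmt18Aux.A_measurable hqmart.stronglyAdapted.adapted hqcont hqbdd x
  have hbb : ∀ ω, BddAbove (Set.range fun t : unitInterval => p t ω) := fun ω => by
    refine ⟨1, ?_⟩; rintro y ⟨t, rfl⟩; exact (hbdd t ω).2
  have hqbb : ∀ ω, BddAbove (Set.range fun t : unitInterval => 1 - p t ω) := fun ω => by
    refine ⟨1, ?_⟩; rintro y ⟨t, rfl⟩; exact (hqbdd t ω).2
  have hsplit : ∀ x : ℝ,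
      (μ {ω | x ≤ (fun ω => if Y ω = 0 then ⨆ t, p t ω else ⨆ t, (1 - p t ω)) ω}).toReal
        = (μ ({ω | x ≤ ⨆ t, p t ω} ∩ {ω | p 1 ω = 1}ᶜ)).toReal + (μ ({ω | x ≤ ⨆ t, (1 - p t ω)} ∩ {ω | p 1 ω = 1})).toReal := by
    intro x
    have hae : {ω | x ≤ (fun ω => if Y ω = 0 then ⨆ t, p t ω else ⨆ t, (1 - p t ω)) ω}
        =ᵐ[μ] (({ω | x ≤ ⨆ t, p t ω} ∩ {ω | p 1 ω = 1}ᶜ) ∪ ({ω | x ≤ ⨆ t, (1 - p t ω)} ∩ {ω | p 1 ω = 1}) : Set Ω) := by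
      rw [Filter.eventuallyEq_set]
      filter_upwards [hY, hterm] with ω hYω htermω
      simp only [Set.mem_setOf_eq, Set.mem_union, Set.mem_inter_iff, Set.mem_compl_iff]
      rcases hYω with h0 | h1
      · have hB : ¬ p 1 ω = 1 := by rw [htermω, h0]; norm_num
        simp [h0, hB]
      · have hB : p 1 ω = 1 := by rw [htermω, h1]
        have hY0 : ¬ Y ω = 0 := by rw [h1]; norm_num
        simp [hY0, hB]
    rw [measure_congr hae,
      measure_union (Disjoint.mono Set.inter_subset_right Set.inter_subset_right
        disjoint_compl_left) ((hAqm x).inter hBmeas),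
      ENNReal.toReal_add (measure_ne_top μ _) (measure_ne_top μ _)]
  have hAqB : ∀ x : ℝ, 1 - p₀ ≤ x → x < 1 →
      (μ ({ω | x ≤ ⨆ t, (1 - p t ω)} ∩ {ω | p 1 ω = 1})).toReal = (1 - p₀)/x - (1 - p₀) := by
    intro x h1x h2x
    have hdiff : μ ({ω | x ≤ ⨆ t, (1 - p t ω)} ∩ {ω | p 1 ω = 1}) + μ ({ω | x ≤ ⨆ t, (1 - p t ω)} \ {ω | p 1 ω = 1})
        = μ {ω | x ≤ ⨆ t, (1 - p t ω)} := measure_inter_add_diff _ hBmeas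
    have hcompl : ({ω | x ≤ ⨆ t, (1 - p t ω)} \ {ω | p 1 ω = 1} : Set Ω) =ᵐ[μ] ({ω | p 1 ω = 1}ᶜ : Set Ω) := by
      rw [Filter.eventuallyEq_set]
      filter_upwards [hp1] with ω h1
      simp only [Set.mem_diff, Set.mem_compl_iff, Set.mem_setOf_eq, and_iff_right_iff_imp]
      intro hB
      have hp10 : p 1 ω = 0 := by
        rcases h1 with h | h
        · exact h
        · exact absurd h hB
      have hle : (1:ℝ) - p 1 ω ≤ ⨆ t, (1 - p t ω) := le_ciSup (hqbb ω) (1 : unitInterval)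
      rw [hp10] at hle
      linarith
    rw [measure_congr hcompl] at hdiff
    have h2 := congrArg ENNReal.toReal hdiff
    rw [ENNReal.toReal_add (measure_ne_top μ _) (measure_ne_top μ _)] at h2
    rw [hq_tail x h1x h2x, hμBc] at h2
    linarith
  constructor
  · intro x h1x h2x
    have hApBc : (μ ({ω | x ≤ ⨆ t, p t ω} ∩ {ω | p 1 ω = 1}ᶜ)).toReal = p₀/x - p₀ := by
      have hdiff : μ ({ω | x ≤ ⨆ t, p t ω} ∩ {ω | p 1 ω = 1}) + μ ({ω | x ≤ ⨆ t, p t ω} \ {ω | p 1 ω = 1})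
          = μ {ω | x ≤ ⨆ t, p t ω} := measure_inter_add_diff _ hBmeas
      have hBsub : {ω | x ≤ ⨆ t, p t ω} ∩ {ω | p 1 ω = 1} = {ω | p 1 ω = 1} := by
        rw [Set.inter_eq_right]
        intro ω hB
        simp only [Set.mem_setOf_eq]
        have hle : p 1 ω ≤ ⨆ t, p t ω := le_ciSup (hbb ω) (1 : unitInterval)
        rw [(hB : p 1 ω = 1)] at hle
        linarith
      rw [hBsub] at hdiff
      have h2 := congrArg ENNReal.toReal hdiff
      rw [ENNReal.toReal_add (measure_ne_top μ _) (measure_ne_top μ _)] at h2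
      rw [hp_tail x h1x h2x, hμB] at h2
      have hsd : ({ω | x ≤ ⨆ t, p t ω} \ {ω | p 1 ω = 1} : Set Ω) = {ω | x ≤ ⨆ t, p t ω} ∩ {ω | p 1 ω = 1}ᶜ := rfl
      rw [hsd] at h2
      linarith
    rw [hsplit x, hApBc, hAqB x (by linarith) h2x]
    have hxne : x ≠ 0 := ne_of_gt (lt_of_lt_of_le hp₀pos h1x)
    field_simp
    ring
  · intro x h1x h2x
    have hApBc : (μ ({ω | x ≤ ⨆ t, p t ω} ∩ {ω | p 1 ω = 1}ᶜ)).toReal = 1 - p₀ := by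
      have hApuniv : {ω | x ≤ ⨆ t, p t ω} = Set.univ := by
        apply Set.eq_univ_of_forall
        intro ω
        simp only [Set.mem_setOf_eq]
        have hle : p 0 ω ≤ ⨆ t, p t ω := le_ciSup (hbb ω) (0 : unitInterval)
        rw [hp0] at hle
        linarith
      rw [hApuniv, Set.univ_inter, hμBc]
    rw [hsplit x, hApBc, hAqB x h1x (by linarith)]
    ring
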